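/- Suppose real-valued smooth functions u, θ, h and complex functions ξ1, ξ2, s on an open set U ⊂ C satisfy ξ1 - ξ2 = |ξ1-ξ2|e^{iθ} with ξ1-ξ2 never zero, and the equation h(ξ1-ξ2) = ((u-iθ)_z)² + (u-iθ)_{zz} + s/2. Define κ = e^{u+iθ}/√2. Then κ_{z̄z̄} + (s̄/2)κ = Re( conj(h(ξ1-ξ2)) · κ ), and in particular Im( κ_{z̄z̄} + (s̄/2)κ ) = 0. -/

import Mathlib

open Complex

noncomputable section

/-- Lorentz inner product on ℝ⁵₁. -/
def L (x y : Fin 5 → ℝ) : ℝ :=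
  x 0 * y 0 + x 1 * y 1 + x 2 * y 2 + x 3 * y 3 - x 4 * y 4

/-- Complex-bilinear extension of the Lorentz form to ℂ⁵. -/
def LC (x y : Fin 5 → ℂ) : ℂ :=
  x 0 * y 0 + x 1 * y 1 + x 2 * y 2 + x 3 * y 3 - x 4 * y 4

/-- Wirtinger ∂/∂z of a real-valued function on ℂ. -/
def wzR (f : ℂ → ℝ) (z : ℂ) : ℂ :=
  (1/2) * ((fderiv ℝ f z 1 : ℂ) - Complex.I * (fderiv ℝ f z Complex.I : ℂ))

/-- Wirtinger ∂/∂z̄ of a real-valued function on ℂ. -/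
def wzbR (f : ℂ → ℝ) (z : ℂ) : ℂ :=
  (1/2) * ((fderiv ℝ f z 1 : ℂ) + Complex.I * (fderiv ℝ f z Complex.I : ℂ))

/-- Wirtinger ∂/∂z of a complex-valued function on ℂ. -/
def wzC (f : ℂ → ℂ) (z : ℂ) : ℂ :=
  (1/2) * (fderiv ℝ f z 1 - Complex.I * fderiv ℝ f z Complex.I)

/-- Wirtinger ∂/∂z̄ of a complex-valued function on ℂ. -/
def wzbC (f : ℂ → ℂ) (z : ℂ) : ℂ :=
  (1/2) * (fderiv ℝ f z 1 + Complex.I * fderiv ℝ f z Complex.I)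

/-- Componentwise Wirtinger ∂/∂z of an ℝ⁵-valued map. -/
def wzVR (F : ℂ → Fin 5 → ℝ) (z : ℂ) : Fin 5 → ℂ := fun j => wzR (fun w => F w j) z

/-- Componentwise Wirtinger ∂/∂z̄ of an ℝ⁵-valued map. -/
def wzbVR (F : ℂ → Fin 5 → ℝ) (z : ℂ) : Fin 5 → ℂ := fun j => wzbR (fun w => F w j) z

/-- Componentwise Wirtinger ∂/∂z of a ℂ⁵-valued map. -/
def wzVC (F : ℂ → Fin 5 → ℂ) (z : ℂ) : Fin 5 → ℂ := fun j => wzC (fun w => F w j) z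

/-- Coercion of a real vector to a complex vector. -/
def coeV (v : Fin 5 → ℝ) : Fin 5 → ℂ := fun j => (v j : ℂ)

lemma wzbC_conj (g : ℂ → ℂ) (z : ℂ) :
    wzbC (fun w => (starRingEnd ℂ) (g w)) z = (starRingEnd ℂ) (wzC g z) := by
  have h : (fun w => (starRingEnd ℂ) (g w)) = (Complex.conjCLE : ℂ ≃L[ℝ] ℂ) ∘ g := by
    funext w; simp
  rw [wzbC, wzC, h, ContinuousLinearEquiv.comp_fderiv]
  simp only [ContinuousLinearMap.coe_comp', Function.comp_apply,
    ContinuousLinearEquiv.coe_coe, Complex.conjCLE_apply]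
  simp only [map_mul, map_sub, map_div₀, map_one, map_ofNat, Complex.conj_I]
  ring

lemma wzbC_congr {f g : ℂ → ℂ} {z : ℂ} (h : f =ᶠ[nhds z] g) : wzbC f z = wzbC g z := by
  rw [wzbC, wzbC, h.fderiv_eq]

lemma wzbC_mul {a b : ℂ → ℂ} {z : ℂ} (ha : DifferentiableAt ℝ a z)
    (hb : DifferentiableAt ℝ b z) :
    wzbC (fun w => a w * b w) z = a z * wzbC b z + b z * wzbC a z := by
  rw [wzbC, wzbC, wzbC, fderiv_fun_mul ha hb]
  simp only [ContinuousLinearMap.add_apply, ContinuousLinearMap.smul_apply, smul_eq_mul]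
  ring

lemma wzbC_exp {f : ℂ → ℂ} {z : ℂ} (hf : DifferentiableAt ℝ f z) :
    wzbC (fun w => Complex.exp (f w)) z = Complex.exp (f z) * wzbC f z := by
  rw [wzbC, wzbC, hf.hasFDerivAt.cexp.fderiv]
  simp only [ContinuousLinearMap.smul_apply, smul_eq_mul]
  ring

lemma wzbC_mul_const {a : ℂ → ℂ} {z : ℂ} (ha : DifferentiableAt ℝ a z) (c : ℂ) :
    wzbC (fun w => a w * c) z = wzbC a z * c := by
  rw [wzbC, wzbC, fderiv_mul_const ha c]
  simp only [ContinuousLinearMap.smul_apply, smul_eq_mul]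
  ring

theorem stmt9 (U : Set ℂ) (hU : IsOpen U) (u θ h : ℂ → ℝ) (ξ1 ξ2 s : ℂ → ℂ)
    (hus : ContDiffOn ℝ (⊤ : ℕ∞) u U) (hθs : ContDiffOn ℝ (⊤ : ℕ∞) θ U) (hhs : ContDiffOn ℝ (⊤ : ℕ∞) h U)
    (hξ1s : ContDiffOn ℝ (⊤ : ℕ∞) ξ1 U) (hξ2s : ContDiffOn ℝ (⊤ : ℕ∞) ξ2 U) (hss : ContDiffOn ℝ (⊤ : ℕ∞) s U)
    (hne : ∀ z ∈ U, ξ1 z - ξ2 z ≠ 0)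
    (hpolar : ∀ z ∈ U, ξ1 z - ξ2 z
      = (‖ξ1 z - ξ2 z‖ : ℂ) * Complex.exp (Complex.I * (θ z : ℂ)))
    (heq : ∀ z ∈ U, (h z : ℂ) * (ξ1 z - ξ2 z)
      = (wzC (fun w => (u w : ℂ) - Complex.I * (θ w : ℂ)) z) ^ 2
        + wzC (wzC (fun w => (u w : ℂ) - Complex.I * (θ w : ℂ))) z + s z / 2) :
    ∀ z ∈ U,
      wzbC (wzbC (fun w => Complex.exp ((u w : ℂ) + Complex.I * (θ w : ℂ)) / (Real.sqrt 2 : ℂ))) z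
          + (starRingEnd ℂ) (s z) / 2
            * (Complex.exp ((u z : ℂ) + Complex.I * (θ z : ℂ)) / (Real.sqrt 2 : ℂ))
        = ((((starRingEnd ℂ) ((h z : ℂ) * (ξ1 z - ξ2 z))
            * (Complex.exp ((u z : ℂ) + Complex.I * (θ z : ℂ)) / (Real.sqrt 2 : ℂ))).re : ℝ) : ℂ) ∧
      (wzbC (wzbC (fun w => Complex.exp ((u w : ℂ) + Complex.I * (θ w : ℂ)) / (Real.sqrt 2 : ℂ))) z
          + (starRingEnd ℂ) (s z) / 2
            * (Complex.exp ((u z : ℂ) + Complex.I * (θ z : ℂ)) / (Real.sqrt 2 : ℂ))).im = 0 := by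
  intro z hz
  set c : ℂ := (Real.sqrt 2 : ℂ) with hcdef
  set g : ℂ → ℂ := fun w => (u w : ℂ) - Complex.I * (θ w : ℂ) with hgdef
  set f : ℂ → ℂ := fun w => (u w : ℂ) + Complex.I * (θ w : ℂ) with hfdef
  have hfg : ∀ w, f w = (starRingEnd ℂ) (g w) := by
    intro w
    simp only [hfdef, hgdef, map_sub, map_mul, Complex.conj_I, Complex.conj_ofReal]
    ring
  -- smoothness
  have huC : ContDiffOn ℝ (⊤ : ℕ∞) (fun w => (u w : ℂ)) U :=
    Complex.ofRealCLM.contDiff.comp_contDiffOn (hus.of_le (by simp))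
  have hθC : ContDiffOn ℝ (⊤ : ℕ∞) (fun w => (θ w : ℂ)) U :=
    Complex.ofRealCLM.contDiff.comp_contDiffOn (hθs.of_le (by simp))
  have hgC : ContDiffOn ℝ (⊤ : ℕ∞) g U := huC.sub (contDiffOn_const.mul hθC)
  have hfC : ContDiffOn ℝ (⊤ : ℕ∞) f U := huC.add (contDiffOn_const.mul hθC)
  have hgd : ∀ w ∈ U, DifferentiableAt ℝ g w := fun w hw =>
    (hgC.differentiableOn (by simp)).differentiableAt (hU.mem_nhds hw)
  have hfd : ∀ w ∈ U, DifferentiableAt ℝ f w := fun w hw =>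
    (hfC.differentiableOn (by simp)).differentiableAt (hU.mem_nhds hw)
  have hfderiv : ContDiffOn ℝ (⊤ : ℕ∞) (fderiv ℝ g) U :=
    ((contDiffOn_infty_iff_fderiv_of_isOpen hU).1 hgC).2
  have hA : ContDiffOn ℝ (⊤ : ℕ∞) (fun w => wzC g w) U := by
    have h1 : ContDiffOn ℝ (⊤ : ℕ∞) (fun w => fderiv ℝ g w 1) U :=
      (ContinuousLinearMap.apply ℝ ℂ (1 : ℂ)).contDiff.comp_contDiffOn hfderiv
    have hI : ContDiffOn ℝ (⊤ : ℕ∞) (fun w => fderiv ℝ g w Complex.I) U :=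
      (ContinuousLinearMap.apply ℝ ℂ Complex.I).contDiff.comp_contDiffOn hfderiv
    exact contDiffOn_const.mul (h1.sub (contDiffOn_const.mul hI))
  have hAd : DifferentiableAt ℝ (fun w => wzC g w) z :=
    (hA.differentiableOn (by simp)).differentiableAt (hU.mem_nhds hz)
  have hAcd : DifferentiableAt ℝ (fun w => (starRingEnd ℂ) (wzC g w)) z := by
    have : (fun w => (starRingEnd ℂ) (wzC g w)) = (Complex.conjCLE : ℂ ≃L[ℝ] ℂ) ∘ (fun w => wzC g w) := by
      funext w; simp
    rw [this]
    exact Complex.conjCLE.differentiable.differentiableAt.comp z hAd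
  have hwzbCf : ∀ w, wzbC f w = (starRingEnd ℂ) (wzC g w) := by
    intro w
    have h2 : f = fun t => (starRingEnd ℂ) (g t) := funext hfg
    rw [h2, wzbC_conj]
  -- first derivative
  have step1 : ∀ w ∈ U, wzbC (fun t => Complex.exp (f t) / c) w
      = Complex.exp (f w) * (starRingEnd ℂ) (wzC g w) * c⁻¹ := by
    intro w hw
    have h1 : (fun t => Complex.exp (f t) / c) = fun t => Complex.exp (f t) * c⁻¹ := by
      funext t; rw [div_eq_mul_inv]
    rw [h1, wzbC_mul_const ((hfd w hw).cexp) c⁻¹, wzbC_exp (hfd w hw), hwzbCf w]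
  have step2 : wzbC (wzbC (fun t => Complex.exp (f t) / c)) z
      = wzbC (fun w => Complex.exp (f w) * (starRingEnd ℂ) (wzC g w) * c⁻¹) z := by
    apply wzbC_congr
    filter_upwards [hU.mem_nhds hz] with w hw using step1 w hw
  have hexpd : DifferentiableAt ℝ (fun w => Complex.exp (f w)) z := (hfd z hz).cexp
  have hmd : DifferentiableAt ℝ (fun w => Complex.exp (f w) * (starRingEnd ℂ) (wzC g w)) z :=
    hexpd.mul hAcd
  have step3 : wzbC (fun w => Complex.exp (f w) * (starRingEnd ℂ) (wzC g w) * c⁻¹) z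
      = (Complex.exp (f z) * (starRingEnd ℂ) (wzC (fun w => wzC g w) z)
          + (starRingEnd ℂ) (wzC g z) * (Complex.exp (f z) * (starRingEnd ℂ) (wzC g z))) * c⁻¹ := by
    rw [wzbC_mul_const hmd c⁻¹, wzbC_mul hexpd hAcd, wzbC_conj, wzbC_exp (hfd z hz), hwzbCf z]
  have hconj : (starRingEnd ℂ) ((h z : ℂ) * (ξ1 z - ξ2 z))
      = ((starRingEnd ℂ) (wzC g z)) ^ 2 + (starRingEnd ℂ) (wzC (fun w => wzC g w) z)
        + (starRingEnd ℂ) (s z) / 2 := by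
    rw [heq z hz]
    simp only [map_add, map_pow, map_div₀, map_ofNat]
  have key : wzbC (wzbC (fun t => Complex.exp (f t) / c)) z
        + (starRingEnd ℂ) (s z) / 2 * (Complex.exp (f z) / c)
      = (starRingEnd ℂ) ((h z : ℂ) * (ξ1 z - ξ2 z)) * (Complex.exp (f z) / c) := by
    rw [step2, step3, hconj]; ring
  -- realness
  have hconjξ : (starRingEnd ℂ) (ξ1 z - ξ2 z)
      = (‖ξ1 z - ξ2 z‖ : ℂ) * Complex.exp (-(Complex.I * (θ z : ℂ))) := by
    have h1 := congrArg (starRingEnd ℂ) (hpolar z hz)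
    rw [map_mul, Complex.conj_ofReal, ← Complex.exp_conj, map_mul, Complex.conj_I,
      Complex.conj_ofReal, neg_mul] at h1
    exact h1
  have hee : Complex.exp (-(Complex.I * (θ z : ℂ))) * Complex.exp (Complex.I * (θ z : ℂ)) = 1 := by
    rw [← Complex.exp_add, neg_add_cancel, Complex.exp_zero]
  have hfz : Complex.exp (f z) = Complex.exp ((u z : ℂ)) * Complex.exp (Complex.I * (θ z : ℂ)) := by
    show Complex.exp ((u z : ℂ) + Complex.I * (θ z : ℂ)) = _
    rw [Complex.exp_add]
  have hreal : (starRingEnd ℂ) ((h z : ℂ) * (ξ1 z - ξ2 z)) * (Complex.exp (f z) / c)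
      = ((h z * ‖ξ1 z - ξ2 z‖ * Real.exp (u z) / Real.sqrt 2 : ℝ) : ℂ) := by
    rw [map_mul, Complex.conj_ofReal, hconjξ, hfz, hcdef, Complex.ofReal_div,
      Complex.ofReal_mul, Complex.ofReal_mul, Complex.ofReal_exp]
    linear_combination ((h z : ℂ) * (‖ξ1 z - ξ2 z‖ : ℂ) * Complex.exp ((u z : ℂ))
      / (Real.sqrt 2 : ℂ)) * hee
  have goal1 : wzbC (wzbC (fun t => Complex.exp (f t) / c)) z
        + (starRingEnd ℂ) (s z) / 2 * (Complex.exp (f z) / c)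
      = ((((starRingEnd ℂ) ((h z : ℂ) * (ξ1 z - ξ2 z)) * (Complex.exp (f z) / c)).re : ℝ) : ℂ) := by
    rw [key, hreal, Complex.ofReal_re]
  have goal2 : (wzbC (wzbC (fun t => Complex.exp (f t) / c)) z
        + (starRingEnd ℂ) (s z) / 2 * (Complex.exp (f z) / c)).im = 0 := by
    rw [key.trans hreal, Complex.ofReal_im]
  exact ⟨goal1, goal2⟩
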